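/- arXiv:0706.4181 — 5 statements merged into one kernel-verified Lean document; each statement's English description precedes it below -/
import Mathlib

section
/- The set of all Tyszka-characterizable elements of a field K forms a subfield of K. -/
/-- A pseudo-morphism on a subset `A` of a field `K`. -/
def IsPseudoMorphism {K : Type*} [Field K] (A : Set K) (φ : K → K) : Prop :=
  ((0 : K) ∈ A → φ 0 = 0) ∧
  ((1 : K) ∈ A → φ 1 = 1) ∧
  (∀ a b : K, a ∈ A → b ∈ A → a + b ∈ A → φ a + φ b = φ (a + b)) ∧
  (∀ a b : K, a ∈ A → b ∈ A → a * b ∈ A → φ a * φ b = φ (a * b))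

/-- `x` is Tyszka-characterizable in the field `K`. -/
def IsTC {K : Type*} [Field K] (x : K) : Prop :=
  ∃ A : Set K, A.Finite ∧ x ∈ A ∧
    ∀ φ : K → K, IsPseudoMorphism A φ → φ x = x

lemma IsPseudoMorphism.mono {K : Type*} [Field K] {A B : Set K} {φ : K → K}
    (hAB : A ⊆ B) (h : IsPseudoMorphism B φ) : IsPseudoMorphism A φ :=
  ⟨fun h0 => h.1 (hAB h0), fun h1 => h.2.1 (hAB h1),
   fun a b ha hb hab => h.2.2.1 a b (hAB ha) (hAB hb) (hAB hab),
   fun a b ha hb hab => h.2.2.2 a b (hAB ha) (hAB hb) (hAB hab)⟩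

lemma isTC_zero {K : Type*} [Field K] : IsTC (0 : K) :=
  ⟨{0}, Set.finite_singleton 0, rfl, fun _ hφ => hφ.1 rfl⟩

lemma isTC_one {K : Type*} [Field K] : IsTC (1 : K) :=
  ⟨{1}, Set.finite_singleton 1, rfl, fun _ hφ => hφ.2.1 rfl⟩

lemma isTC_add {K : Type*} [Field K] {x y : K} (hx : IsTC x) (hy : IsTC y) :
    IsTC (x + y) := by
  obtain ⟨A, hAf, hxA, hA⟩ := hx
  obtain ⟨B, hBf, hyB, hB⟩ := hy
  refine ⟨A ∪ B ∪ {x + y}, ((hAf.union hBf).union (Set.finite_singleton _)),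
    Or.inr rfl, fun φ hφ => ?_⟩
  have hx' : φ x = x := hA φ (hφ.mono (fun a ha => Or.inl (Or.inl ha)))
  have hy' : φ y = y := hB φ (hφ.mono (fun a ha => Or.inl (Or.inr ha)))
  have := hφ.2.2.1 x y (Or.inl (Or.inl hxA)) (Or.inl (Or.inr hyB)) (Or.inr rfl)
  rw [hx', hy'] at this
  exact this.symm

lemma isTC_mul {K : Type*} [Field K] {x y : K} (hx : IsTC x) (hy : IsTC y) :
    IsTC (x * y) := by
  obtain ⟨A, hAf, hxA, hA⟩ := hx
  obtain ⟨B, hBf, hyB, hB⟩ := hy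
  refine ⟨A ∪ B ∪ {x * y}, ((hAf.union hBf).union (Set.finite_singleton _)),
    Or.inr rfl, fun φ hφ => ?_⟩
  have hx' : φ x = x := hA φ (hφ.mono (fun a ha => Or.inl (Or.inl ha)))
  have hy' : φ y = y := hB φ (hφ.mono (fun a ha => Or.inl (Or.inr ha)))
  have := hφ.2.2.2 x y (Or.inl (Or.inl hxA)) (Or.inl (Or.inr hyB)) (Or.inr rfl)
  rw [hx', hy'] at this
  exact this.symm

lemma isTC_neg {K : Type*} [Field K] {x : K} (hx : IsTC x) : IsTC (-x) := by
  obtain ⟨A, hAf, hxA, hA⟩ := hx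
  refine ⟨A ∪ {0, -x}, hAf.union ((Set.finite_singleton _).insert _),
    Or.inr (Or.inr rfl), fun φ hφ => ?_⟩
  have hx' : φ x = x := hA φ (hφ.mono (fun a ha => Or.inl ha))
  have h0 : φ 0 = 0 := hφ.1 (Or.inr (Or.inl rfl))
  have := hφ.2.2.1 x (-x) (Or.inl hxA) (Or.inr (Or.inr rfl))
    (by simp only [add_neg_cancel]; exact Or.inr (Or.inl rfl))
  rw [hx', add_neg_cancel, h0] at this
  exact eq_neg_of_add_eq_zero_right this

lemma isTC_inv {K : Type*} [Field K] {x : K} (hx : IsTC x) : IsTC x⁻¹ := by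
  rcases eq_or_ne x 0 with rfl | hx0
  · simpa using isTC_zero
  obtain ⟨A, hAf, hxA, hA⟩ := hx
  refine ⟨A ∪ {1, x⁻¹}, hAf.union ((Set.finite_singleton _).insert _),
    Or.inr (Or.inr rfl), fun φ hφ => ?_⟩
  have hx' : φ x = x := hA φ (hφ.mono (fun a ha => Or.inl ha))
  have h1 : φ 1 = 1 := hφ.2.1 (Or.inr (Or.inl rfl))
  have := hφ.2.2.2 x x⁻¹ (Or.inl hxA) (Or.inr (Or.inr rfl))
    (by rw [mul_inv_cancel₀ hx0]; exact Or.inr (Or.inl rfl))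
  rw [hx', mul_inv_cancel₀ hx0, h1] at this
  exact eq_inv_of_mul_eq_one_left (by rw [mul_comm]; exact this)

theorem TC_elements_form_subfield (K : Type*) [Field K] :
    ∃ F : Subfield K, (F : Set K) = {x : K | IsTC x} := by
  refine ⟨{ carrier := {x : K | IsTC x}
            zero_mem' := isTC_zero
            one_mem' := isTC_one
            add_mem' := fun hx hy => isTC_add hx hy
            mul_mem' := fun hx hy => isTC_mul hx hy
            neg_mem' := fun hx => isTC_neg hx
            inv_mem' := fun _ hx => isTC_inv hx }, rfl⟩
end

section
/- If K is a subfield of a field E and x ∈ E is algebraic over K, then x is finitely Tyszka-characterizable (FTC) with respect to K: there exist finite sets A, B ⊆ E with x ∈ A such that every K-pseudo-morphism φ : A → E satisfies φ(x) ∈ B. Concretely, if P = ∑_{i=0}^d a_i X^i ∈ K[X] is a nonzero polynomial with P(x) = 0, one may take A = {a_i : 0 ≤ i ≤ d} ∪ {x^i : 0 ≤ i ≤ d} ∪ {a_i x^i : 0 ≤ i ≤ d} ∪ {∑_{i=0}^j a_i x^i : 0 ≤ j ≤ d} and B = {y ∈ E : P(y) = 0}. -/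
/-- A `K`-pseudo-morphism on a subset `A` of a field `E`, where `K` is a subfield of `E`:
it fixes every element of `A ∩ K` and preserves sums and products within `A`. -/
def IsKPseudoMorphism {E : Type*} [Field E] (K : Subfield E) (A : Set E) (φ : E → E) : Prop :=
  (∀ k : E, k ∈ A → k ∈ K → φ k = k) ∧
  (∀ a b : E, a ∈ A → b ∈ A → a + b ∈ A → φ (a + b) = φ a + φ b) ∧
  (∀ a b : E, a ∈ A → b ∈ A → a * b ∈ A → φ (a * b) = φ a * φ b)

theorem algebraic_implies_FTC {E : Type*} [Field E] (K : Subfield E) (x : E)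
    (P : Polynomial E) (hPK : ∀ i, P.coeff i ∈ K) (hP0 : P ≠ 0) (hPx : P.eval x = 0) :
    let d := P.natDegree
    let A : Set E :=
      (Set.range fun i : Fin (d + 1) => P.coeff i) ∪
      (Set.range fun i : Fin (d + 1) => x ^ (i : ℕ)) ∪
      (Set.range fun i : Fin (d + 1) => P.coeff i * x ^ (i : ℕ)) ∪
      (Set.range fun j : Fin (d + 1) => ∑ i ∈ Finset.range ((j : ℕ) + 1), P.coeff i * x ^ i)
    let B : Set E := {y : E | P.eval y = 0}
    A.Finite ∧ B.Finite ∧ x ∈ A ∧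
      ∀ φ : E → E, IsKPseudoMorphism K A φ → φ x ∈ B := by
  intro d A B
  have hd : 1 ≤ d := by
    rcases Nat.eq_zero_or_pos d with h | h
    · exfalso
      have := Polynomial.eq_C_of_natDegree_eq_zero h
      rw [this] at hPx hP0
      simp at hPx
      simp [hPx] at hP0
    · exact h
  have hA1 : ∀ i : Fin (d + 1), P.coeff i ∈ A := fun i =>
    Or.inl (Or.inl (Or.inl ⟨i, rfl⟩))
  have hA2 : ∀ i : Fin (d + 1), x ^ (i : ℕ) ∈ A := fun i =>
    Or.inl (Or.inl (Or.inr ⟨i, rfl⟩))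
  have hA3 : ∀ i : Fin (d + 1), P.coeff i * x ^ (i : ℕ) ∈ A := fun i =>
    Or.inl (Or.inr ⟨i, rfl⟩)
  have hA4 : ∀ j : Fin (d + 1),
      (∑ i ∈ Finset.range ((j : ℕ) + 1), P.coeff i * x ^ i) ∈ A := fun j =>
    Or.inr ⟨j, rfl⟩
  have hxA : x ∈ A := by
    have := hA2 ⟨1, by omega⟩
    simpa using this
  refine ⟨?_, ?_, hxA, ?_⟩
  · apply Set.Finite.union
    apply Set.Finite.union
    apply Set.Finite.union
    all_goals exact Set.finite_range _
  · exact Polynomial.finite_setOf_isRoot hP0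
  · rintro φ ⟨hK, hadd, hmul⟩
    have hpow : ∀ i : ℕ, i ≤ d → φ (x ^ i) = (φ x) ^ i := by
      intro i hi
      induction i with
      | zero =>
        simp only [pow_zero]
        exact hK 1 (by simpa using hA2 ⟨0, by omega⟩) (one_mem K)
      | succ n ih =>
        have hn : n ≤ d := by omega
        have h1 : x ^ n ∈ A := hA2 ⟨n, by omega⟩
        have h2 : x ^ (n + 1) ∈ A := hA2 ⟨n + 1, by omega⟩
        have : φ (x ^ n * x) = φ (x ^ n) * φ x := by
          apply hmul _ _ h1 hxA
          rw [← pow_succ]; exact h2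
        rw [pow_succ, this, ih hn, pow_succ]
    have hterm : ∀ i : ℕ, i ≤ d → φ (P.coeff i * x ^ i) = P.coeff i * (φ x) ^ i := by
      intro i hi
      have h1 : P.coeff i ∈ A := hA1 ⟨i, by omega⟩
      have h2 : x ^ i ∈ A := hA2 ⟨i, by omega⟩
      have h3 : P.coeff i * x ^ i ∈ A := hA3 ⟨i, by omega⟩
      rw [hmul _ _ h1 h2 h3, hK _ h1 (hPK i), hpow i hi]
    have hsum : ∀ j : ℕ, j ≤ d →
        φ (∑ i ∈ Finset.range (j + 1), P.coeff i * x ^ i) =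
          ∑ i ∈ Finset.range (j + 1), P.coeff i * (φ x) ^ i := by
      intro j hj
      induction j with
      | zero => simpa using hterm 0 (by omega)
      | succ n ih =>
        have hn : n ≤ d := by omega
        have h1 : (∑ i ∈ Finset.range (n + 1), P.coeff i * x ^ i) ∈ A := hA4 ⟨n, by omega⟩
        have h3 : P.coeff (n + 1) * x ^ (n + 1) ∈ A := hA3 ⟨n + 1, by omega⟩
        have h2 : (∑ i ∈ Finset.range (n + 1 + 1), P.coeff i * x ^ i) ∈ A :=
          hA4 ⟨n + 1, by omega⟩
        rw [Finset.sum_range_succ] at h2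
        rw [Finset.sum_range_succ, Finset.sum_range_succ (fun i => P.coeff i * (φ x) ^ i),
          hadd _ _ h1 h3 h2, ih hn, hterm (n + 1) hj]
    have heval : P.eval x = ∑ i ∈ Finset.range (d + 1), P.coeff i * x ^ i :=
      P.eval_eq_sum_range x
    have h0A : (0 : E) ∈ A := by
      have := hA4 ⟨d, by omega⟩
      simp only at this
      rwa [← heval, hPx] at this
    have hφ0 : φ 0 = 0 := hK 0 h0A (zero_mem K)
    show P.eval (φ x) = 0
    rw [Polynomial.eval_eq_sum_range, ← hsum d le_rfl, ← heval, hPx, hφ0]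
end

section
/- Let F ∈ 𝔽_p[[X]] with coefficient sequence (f_n), let N ∈ ℕ, and let A₂ = {f_i·1 : i ≤ N} ∪ {X} ∪ {G_j : 0 ≤ j ≤ N+1} ∪ {X·G_j : 0 ≤ j ≤ N+1} where G_j(X) = ∑_{i≥j} f_i X^{i-j}. Then every 𝔽_p[X]-pseudo-morphism φ : A₂ → 𝔽_p[[X]] satisfies φ(F) = ∑_{i=0}^N f_i X^i + X^{N+1} φ(G_{N+1}), hence ‖F - φ(F)‖ ≤ p^{-(N+1)}. -/
/-!
Writing `G_j = f_j + X·G_{j+1}`, all three terms lie in `A₂` for `j ≤ N`, and `φ` fixes the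
constant `f_j` and `X`, so `φ(G_j) = f_j + X·φ(G_{j+1})`. Unrolling this recursion `N + 1` times
from `G_0 = F` gives the formula for `φ(F)`; unrolling the same recursion for the `G_j`
themselves gives `F = ∑_{i ≤ N} f_i X^i + X^{N+1} G_{N+1}`, so `F - φ(F)` is divisible by
`X^{N+1}`.
-/

/-- An `𝔽_p[X]`-pseudo-morphism on a subset `A` of `𝔽_p⟦X⟧`: it fixes every element of `A`
that is (the power series of) a polynomial, and preserves sums and products within `A`. -/
def IsPolyPseudoMorphism (p : ℕ) [Fact p.Prime] (A : Set (PowerSeries (ZMod p)))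
    (φ : PowerSeries (ZMod p) → PowerSeries (ZMod p)) : Prop :=
  (∀ a ∈ A, (∃ q : Polynomial (ZMod p),
      Polynomial.coeToPowerSeries.ringHom q = a) → φ a = a) ∧
  (∀ a b : PowerSeries (ZMod p), a ∈ A → b ∈ A → a + b ∈ A → φ (a + b) = φ a + φ b) ∧
  (∀ a b : PowerSeries (ZMod p), a ∈ A → b ∈ A → a * b ∈ A → φ (a * b) = φ a * φ b)

/-- The `j`-th shift `G_j(X) = ∑_{i ≥ j} f_i X^{i-j}` of a power series. -/
noncomputable def shiftSeries (p : ℕ) (F : PowerSeries (ZMod p)) (j : ℕ) :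
    PowerSeries (ZMod p) :=
  PowerSeries.mk fun n => PowerSeries.coeff (R := ZMod p) (n + j) F

open PowerSeries

namespace PowerSeries

variable {R : Type*}

theorem eq_sum_add_X_pow_mul_of_forall_eq_C_add_X_mul [CommSemiring R] (u : ℕ → R⟦X⟧)
    (c : ℕ → R) {k : ℕ} (h : ∀ j < k, u j = C (c j) + X * u (j + 1)) :
    u 0 = ∑ i ∈ Finset.range k, C (c i) * X ^ i + X ^ k * u k := by
  induction k with
  | zero => simp
  | succ k ih =>
    rw [ih fun j hj => h j (by omega), h k (by omega), Finset.sum_range_succ]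
    ring

theorem le_order_X_pow_mul [Semiring R] (n : ℕ) (f : R⟦X⟧) : (n : ℕ∞) ≤ (X ^ n * f).order :=
  nat_le_order _ _ fun i hi => by simp [coeff_X_pow_mul', Nat.not_le_of_lt hi]

end PowerSeries

section shiftSeries

variable (p : ℕ) (F : (ZMod p)⟦X⟧)

theorem shiftSeries_zero : shiftSeries p F 0 = F := by
  ext n; simp [shiftSeries]

theorem shiftSeries_eq_C_add_X_mul (j : ℕ) :
    shiftSeries p F j = C (coeff j F) + X * shiftSeries p F (j + 1) := by
  ext n
  cases n with
  | zero => simp [shiftSeries]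
  | succ m =>
    simp [shiftSeries, coeff_succ_X_mul, Nat.add_right_comm m 1 j, add_assoc]

theorem eq_sum_add_X_pow_mul_shiftSeries (k : ℕ) :
    F = ∑ i ∈ Finset.range k, C (coeff i F) * X ^ i + X ^ k * shiftSeries p F k := by
  conv_lhs => rw [← shiftSeries_zero p F]
  exact eq_sum_add_X_pow_mul_of_forall_eq_C_add_X_mul _ _
    fun j _ => shiftSeries_eq_C_add_X_mul p F j

end shiftSeries

namespace IsPolyPseudoMorphism

variable {p : ℕ} [Fact p.Prime] {A : Set (ZMod p)⟦X⟧} {φ : (ZMod p)⟦X⟧ → (ZMod p)⟦X⟧}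

theorem map_C_add_X_mul (hφ : IsPolyPseudoMorphism p A φ) {c : ZMod p} {g : (ZMod p)⟦X⟧}
    (hc : C c ∈ A) (hX : X ∈ A) (hg : g ∈ A) (hXg : X * g ∈ A) (hsum : C c + X * g ∈ A) :
    φ (C c + X * g) = C c + X * φ g := by
  obtain ⟨hfix, hadd, hmul⟩ := hφ
  rw [hadd _ _ hc hXg hsum, hmul _ _ hX hg hXg, hfix _ hc ⟨Polynomial.C c, by simp⟩,
    hfix _ hX ⟨Polynomial.X, by simp⟩]

end IsPolyPseudoMorphism

theorem pseudoMorphism_approximates (p : ℕ) [Fact p.Prime] (F : PowerSeries (ZMod p))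
    (N : ℕ)
    (A₂ : Set (PowerSeries (ZMod p)))
    (hA₂ : A₂ =
      {g | ∃ i ≤ N, g = PowerSeries.C (R := ZMod p) (PowerSeries.coeff (R := ZMod p) i F)} ∪
      {PowerSeries.X} ∪
      {g | ∃ j ≤ N + 1, g = shiftSeries p F j} ∪
      {g | ∃ j ≤ N + 1, g = PowerSeries.X * shiftSeries p F j})
    (φ : PowerSeries (ZMod p) → PowerSeries (ZMod p))
    (hφ : IsPolyPseudoMorphism p A₂ φ) :
    φ F = (∑ i ∈ Finset.range (N + 1),
        PowerSeries.C (R := ZMod p) (PowerSeries.coeff (R := ZMod p) i F) * PowerSeries.X ^ i) +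
      PowerSeries.X ^ (N + 1) * φ (shiftSeries p F (N + 1)) ∧
    ((N + 1 : ℕ∞) ≤ (F - φ F).order) := by
  have hG : ∀ j ≤ N + 1, shiftSeries p F j ∈ A₂ := fun j hj => by
    rw [hA₂]; exact .inl (.inr ⟨j, hj, rfl⟩)
  have hstep : ∀ j < N + 1, φ (shiftSeries p F j) =
      C (coeff j F) + X * φ (shiftSeries p F (j + 1)) := fun j hj => by
    have hsum := hG j hj.le
    rw [shiftSeries_eq_C_add_X_mul] at hsum ⊢
    refine hφ.map_C_add_X_mul ?_ ?_ (hG _ hj) ?_ hsum <;> rw [hA₂]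
    exacts [.inl (.inl (.inl ⟨j, by omega, rfl⟩)), .inl (.inl (.inr rfl)), .inr ⟨j + 1, hj, rfl⟩]
  have hφF := eq_sum_add_X_pow_mul_of_forall_eq_C_add_X_mul _ _ hstep
  rw [shiftSeries_zero] at hφF
  refine ⟨hφF, ?_⟩
  have hdiff : F - φ F =
      X ^ (N + 1) * (shiftSeries p F (N + 1) - φ (shiftSeries p F (N + 1))) := by
    rw [hφF]
    nth_rewrite 1 [eq_sum_add_X_pow_mul_shiftSeries p F (N + 1)]
    ring
  exact hdiff ▸ le_order_X_pow_mul _ _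
end

section
/- Let F ∈ 𝔽_p[[X]] be algebraic over 𝔽_p(X). Then F is Tyszka-characterizable over 𝔽_p[X] in 𝔽_p[[X]]: there exists a finite set A ⊆ 𝔽_p[[X]] containing F such that every 𝔽_p[X]-pseudo-morphism φ : A → 𝔽_p[[X]] satisfies φ(F) = F. -/
/-!
If `Q(F) = 0` for a nonzero `Q` with polynomial coefficients, a pseudo-morphism `φ` defined on
all the intermediate values of the evaluation `Q(F) = ∑ cᵢ Fⁱ` sends `F` to a root of `Q`.
Writing `F = Xᴺ H + T` with `T` a polynomial and putting `Xᴺ`, `H`, `Xᴺ H`, `T` into the domain as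
well forces `φ F ≡ F (mod Xᴺ)`. Since `Q` has finitely many roots, for `N` large enough the only
root congruent to `F` modulo `Xᴺ` is `F` itself.
-/

section PreservesAddMulOn

open Polynomial

variable {R : Type*} [CommRing R]

def PreservesAddMulOn (A : Set R) (φ : R → R) : Prop :=
  (∀ a b, a ∈ A → b ∈ A → a + b ∈ A → φ (a + b) = φ a + φ b) ∧
    (∀ a b, a ∈ A → b ∈ A → a * b ∈ A → φ (a * b) = φ a * φ b)

noncomputable def evalPartial (Q : R[X]) (x : R) (k : ℕ) : R :=
  ∑ i ∈ Finset.range (k + 1), Q.coeff i * x ^ i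

theorem evalPartial_succ (Q : R[X]) (x : R) (k : ℕ) :
    evalPartial Q x (k + 1) = evalPartial Q x k + Q.coeff (k + 1) * x ^ (k + 1) :=
  Finset.sum_range_succ _ _

def evalTrace (Q : R[X]) (x : R) : Set R :=
  ⋃ i ∈ Finset.range (Q.natDegree + 1),
    ({x ^ i, Q.coeff i, Q.coeff i * x ^ i, evalPartial Q x i} : Set R)

theorem evalTrace_finite (Q : R[X]) (x : R) : (evalTrace Q x).Finite :=
  (Finset.range _).finite_toSet.biUnion fun _ _ => Set.toFinite _

theorem subset_evalTrace (Q : R[X]) (x : R) {i : ℕ} (hi : i ≤ Q.natDegree) :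
    ({x ^ i, Q.coeff i, Q.coeff i * x ^ i, evalPartial Q x i} : Set R) ⊆ evalTrace Q x :=
  fun _ hy => Set.mem_biUnion (Finset.mem_range_succ_iff.mpr hi) hy

variable {A : Set R} {φ : R → R}

theorem PreservesAddMulOn.map_pow (hφ : PreservesAddMulOn A φ) {x : R} {n : ℕ}
    (hA : ∀ i ≤ n, x ^ i ∈ A) (h1 : φ 1 = 1) : ∀ i ≤ n, φ (x ^ i) = φ x ^ i := by
  intro i hi
  induction i with
  | zero => simpa using h1
  | succ i ih =>
    have hx : x ∈ A := by simpa using hA 1 (by omega)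
    rw [pow_succ, hφ.2 _ _ (hA i (by omega)) hx (pow_succ x i ▸ hA _ hi), ih (by omega),
      pow_succ]

theorem PreservesAddMulOn.map_eval (hφ : PreservesAddMulOn A φ) {Q : R[X]} {x : R}
    (hA : evalTrace Q x ⊆ A) (h1 : φ 1 = 1)
    (hcoeff : ∀ i ≤ Q.natDegree, φ (Q.coeff i) = Q.coeff i) :
    φ (Q.eval x) = Q.eval (φ x) := by
  have mem : ∀ i ≤ Q.natDegree, x ^ i ∈ A ∧ Q.coeff i ∈ A ∧ Q.coeff i * x ^ i ∈ A ∧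
      evalPartial Q x i ∈ A := fun i hi => by
    have := (subset_evalTrace Q x hi).trans hA
    simp only [Set.insert_subset_iff, Set.singleton_subset_iff] at this
    exact this
  have hpow := hφ.map_pow (fun i hi => (mem i hi).1) h1
  have hterm : ∀ i ≤ Q.natDegree, φ (Q.coeff i * x ^ i) = Q.coeff i * φ x ^ i := fun i hi => by
    rw [hφ.2 _ _ (mem i hi).2.1 (mem i hi).1 (mem i hi).2.2.1, hcoeff i hi, hpow i hi]
  have hpartial : ∀ k ≤ Q.natDegree, φ (evalPartial Q x k) = evalPartial Q (φ x) k := by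
    intro k hk
    induction k with
    | zero => simpa [evalPartial] using hterm 0 hk
    | succ k ih =>
      rw [evalPartial_succ, hφ.1 _ _ (mem k (by omega)).2.2.2 (mem _ hk).2.2.1
        (evalPartial_succ Q x k ▸ (mem _ hk).2.2.2), ih (by omega), hterm _ hk, evalPartial_succ]
  simpa only [evalPartial, ← eval_eq_sum_range] using hpartial _ le_rfl

theorem PreservesAddMulOn.sub_dvd_of_eq_mul_add (hφ : PreservesAddMulOn A φ) {x a b c : R}
    (hx : x = b * c + a) (ha : a ∈ A) (hb : b ∈ A) (hc : c ∈ A) (hbc : b * c ∈ A) (hxA : x ∈ A)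
    (hφa : φ a = a) (hφb : φ b = b) : b ∣ φ x - x := by
  subst hx
  rw [hφ.1 _ _ hbc ha hxA, hφ.2 _ _ hb hc hbc, hφa, hφb]
  exact ⟨φ c - c, by ring⟩

end PreservesAddMulOn

theorem IsPolyPseudoMorphism.preservesAddMulOn {p : ℕ} [Fact p.Prime]
    {A : Set (PowerSeries (ZMod p))} {φ : PowerSeries (ZMod p) → PowerSeries (ZMod p)}
    (hφ : IsPolyPseudoMorphism p A φ) : PreservesAddMulOn A φ :=
  ⟨hφ.2.1, hφ.2.2⟩

namespace PowerSeries

open Filter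

variable {R : Type*} [CommRing R]

theorem eventually_not_X_pow_dvd {f : PowerSeries R} (hf : f ≠ 0) :
    ∀ᶠ N in atTop, ¬ X ^ N ∣ f := by
  filter_upwards [eventually_gt_atTop f.order.toNat] with N hN hdvd
  have hle := nat_le_order f N (X_pow_dvd_iff.mp hdvd)
  rw [← ENat.natCast_toNat (order_eq_top.not.mpr hf), ENat.natCast_le_natCast] at hle
  omega

theorem eventually_forall_eq_of_X_pow_dvd_sub {s : Set (PowerSeries R)} (hs : s.Finite)
    (F : PowerSeries R) : ∀ᶠ N in atTop, ∀ G ∈ s, X ^ N ∣ G - F → G = F := by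
  refine hs.eventually_all.2 fun G _ => ?_
  by_cases h : G = F
  · exact Eventually.of_forall fun _ _ => h
  · filter_upwards [eventually_not_X_pow_dvd (sub_ne_zero.mpr h)] with N hN hdvd
    exact absurd hdvd hN

end PowerSeries

theorem algebraic_implies_TC (p : ℕ) [Fact p.Prime] (F : PowerSeries (ZMod p))
    (halg : ∃ P : Polynomial (Polynomial (ZMod p)), P ≠ 0 ∧
      Polynomial.eval₂ Polynomial.coeToPowerSeries.ringHom F P = 0) :
    ∃ A : Set (PowerSeries (ZMod p)), A.Finite ∧ F ∈ A ∧
      ∀ φ : PowerSeries (ZMod p) → PowerSeries (ZMod p),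
        IsPolyPseudoMorphism p A φ → φ F = F := by
  obtain ⟨P, hP0, hPF⟩ := halg
  set ι : Polynomial (ZMod p) →+* PowerSeries (ZMod p) := Polynomial.coeToPowerSeries.ringHom
  set Q := P.map ι
  have hQ0 : Q ≠ 0 := (Polynomial.map_ne_zero_iff (Polynomial.coe_injective _)).mpr hP0
  have hQF : Q.eval F = 0 := by rwa [Polynomial.eval_map]
  obtain ⟨N, hN⟩ : ∃ N, ∀ G ∈ {x | x ∈ Q.roots}, PowerSeries.X ^ N ∣ G - F → G = F :=
    (PowerSeries.eventually_forall_eq_of_X_pow_dvd_sub Q.roots.finite_toSet F).exists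
  obtain ⟨T, H, hFTH⟩ : ∃ T H, F = PowerSeries.X ^ N * H + ι T :=
    ⟨_, _, PowerSeries.eq_X_pow_mul_shift_add_trunc N F⟩
  let A := {F, 0, ι T, PowerSeries.X ^ N, H, PowerSeries.X ^ N * H} ∪ evalTrace Q F
  have htrace : evalTrace Q F ⊆ A := Set.subset_union_right
  refine ⟨A, .union (Set.toFinite _) (evalTrace_finite Q F), by simp [A], fun φ hφ => ?_⟩
  have hfix : ∀ a ∈ A, ∀ q, ι q = a → φ a = a := fun a ha q hq => hφ.1 a ha ⟨q, hq⟩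
  have h1 : φ 1 = 1 :=
    hfix 1 (htrace (subset_evalTrace Q F (Nat.zero_le _) (by simp))) 1 (map_one ι)
  have hcoeff : ∀ i ≤ Q.natDegree, φ (Q.coeff i) = Q.coeff i := fun i hi =>
    hfix _ (htrace (subset_evalTrace Q F hi (by simp))) _ (Polynomial.coeff_map ι i).symm
  have hroot : Q.eval (φ F) = 0 := by
    rw [← hφ.preservesAddMulOn.map_eval htrace h1 hcoeff, hQF,
      hfix 0 (by simp [A]) 0 (map_zero ι)]
  have hdvd : PowerSeries.X ^ N ∣ φ F - F :=
    hφ.preservesAddMulOn.sub_dvd_of_eq_mul_add hFTH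
      (by simp [A]) (by simp [A]) (by simp [A]) (by simp [A]) (by simp [A])
      (hfix _ (by simp [A]) T rfl) (hfix _ (by simp [A]) (Polynomial.X ^ N) (by simp [ι]))
  exact hN (φ F) ((Polynomial.mem_roots' (p := Q)).mpr ⟨hQ0, hroot⟩) hdvd
end

section
/- Let F, G ∈ 𝔽_p[[X]], and set H₁ = F^p + X·G^p, H₂ = G^p + X·F^p. Let A = {X, H₁, H₂} ∪ {F^i, G^i : 1 ≤ i ≤ p} ∪ {X·F^p, X·G^p}. Then every pseudo-morphism φ : A → 𝔽_p[[X]] fixing X and H₁ (and preserving sums and products within A) satisfies φ(F) = F, φ(G) = G, and φ(H₂) = H₂. -/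
open PowerSeries
variable (p : ℕ) [Fact p.Prime]

lemma order_pow' (a : PowerSeries (ZMod p)) (n : ℕ) : (a^n).order = n * a.order := by
  induction n with
  | zero => simp
  | succ k ih => rw [pow_succ, PowerSeries.order_mul, ih]; push_cast; ring

lemma cartier (f g u v : PowerSeries (ZMod p))
    (h : f^p + X*g^p = u^p + X*v^p) : f = u ∧ g = v := by
  have hc : CharP (PowerSeries (ZMod p)) p :=
    charP_of_injective_ringHom (PowerSeries.C_injective) p
  have key : (f - u)^p = X * (v - g)^p := by
    rw [sub_pow_char, sub_pow_char, mul_sub]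
    linear_combination h
  have hfu : f - u = 0 := by
    by_contra hne
    have hvg : (v - g) ≠ 0 := by
      intro h0; rw [h0, zero_pow (Fact.out (p := p.Prime)).ne_zero, mul_zero] at key
      exact hne (pow_eq_zero_iff (Fact.out (p := p.Prime)).ne_zero |>.mp key)
    have ho := congrArg PowerSeries.order key
    rw [order_pow', PowerSeries.order_mul, PowerSeries.order_X, order_pow'] at ho
    have hm' : (f - u).order ≠ ⊤ := fun ht => hne (PowerSeries.order_eq_top.mp ht)
    have hk' : (v - g).order ≠ ⊤ := fun ht => hvg (PowerSeries.order_eq_top.mp ht)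
    obtain ⟨m, hm⟩ := WithTop.ne_top_iff_exists.mp hm'
    obtain ⟨k, hk⟩ := WithTop.ne_top_iff_exists.mp hk'
    rw [← hm, ← hk] at ho
    have h2 : ((p * m : ℕ) : ℕ∞) = ((1 + p * k : ℕ) : ℕ∞) := by push_cast; exact ho
    have h3 : p * m = 1 + p * k := Nat.cast_injective h2
    have h4 : p ∣ 1 + p * k := h3 ▸ Dvd.intro m rfl
    rw [add_comm] at h4
    have hd : p ∣ 1 := (Nat.dvd_add_right (Dvd.intro k rfl)).mp h4
    exact (Fact.out (p := p.Prime)).one_lt.ne' (Nat.dvd_one.mp hd)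
  have hp : p ≠ 0 := (Fact.out (p := p.Prime)).ne_zero
  have hvg : v - g = 0 := by
    rw [hfu, zero_pow hp] at key
    have := (mul_eq_zero.mp key.symm).resolve_left PowerSeries.X_ne_zero
    exact pow_eq_zero_iff hp |>.mp this
  constructor <;> [exact sub_eq_zero.mp hfu; exact (sub_eq_zero.mp hvg).symm]

theorem FTC_dependence_counterexample (p : ℕ) [Fact p.Prime]
    (F G : PowerSeries (ZMod p)) :
    let H₁ := F ^ p + PowerSeries.X * G ^ p
    let H₂ := G ^ p + PowerSeries.X * F ^ p
    let A : Set (PowerSeries (ZMod p)) :=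
      {PowerSeries.X, H₁, H₂} ∪
      {g | ∃ i, 1 ≤ i ∧ i ≤ p ∧ (g = F ^ i ∨ g = G ^ i)} ∪
      {PowerSeries.X * F ^ p, PowerSeries.X * G ^ p}
    ∀ φ : PowerSeries (ZMod p) → PowerSeries (ZMod p),
      φ PowerSeries.X = PowerSeries.X →
      φ H₁ = H₁ →
      (∀ a b, a ∈ A → b ∈ A → a + b ∈ A → φ (a + b) = φ a + φ b) →
      (∀ a b, a ∈ A → b ∈ A → a * b ∈ A → φ (a * b) = φ a * φ b) →
      φ F = F ∧ φ G = G ∧ φ H₂ = H₂ := by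
  intro H₁ H₂ A φ hX hH1 hadd hmul
  have hp1 : 1 ≤ p := (Fact.out (p := p.Prime)).one_lt.le.trans' (by omega)
  have memX : PowerSeries.X ∈ A := Or.inl (Or.inl (Or.inl rfl))
  have memH1 : H₁ ∈ A := Or.inl (Or.inl (Or.inr (Or.inl rfl)))
  have memH2 : H₂ ∈ A := Or.inl (Or.inl (Or.inr (Or.inr rfl)))
  have memF : ∀ i, 1 ≤ i → i ≤ p → F ^ i ∈ A :=
    fun i h1 h2 => Or.inl (Or.inr ⟨i, h1, h2, Or.inl rfl⟩)
  have memG : ∀ i, 1 ≤ i → i ≤ p → G ^ i ∈ A :=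
    fun i h1 h2 => Or.inl (Or.inr ⟨i, h1, h2, Or.inr rfl⟩)
  have memXF : PowerSeries.X * F ^ p ∈ A := Or.inr (Or.inl rfl)
  have memXG : PowerSeries.X * G ^ p ∈ A := Or.inr (Or.inr rfl)
  have memF1 : F ∈ A := by simpa using memF 1 le_rfl hp1
  have memG1 : G ∈ A := by simpa using memG 1 le_rfl hp1
  have powF : ∀ (F : PowerSeries (ZMod p)), F ∈ A → (∀ i, 1 ≤ i → i ≤ p → F ^ i ∈ A) →
      ∀ i, 1 ≤ i → i ≤ p → φ (F ^ i) = φ F ^ i := by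
    intro F hF hFi i h1 h2
    induction i with
    | zero => omega
    | succ k ih =>
      rcases Nat.eq_or_lt_of_le h1 with h | h
      · simp [← h]
      · have hk1 : 1 ≤ k := by omega
        have hkp : k ≤ p := by omega
        have hm := hmul (F ^ k) F (hFi k hk1 hkp) hF
          (by rw [← pow_succ]; exact hFi (k+1) (by omega) h2)
        rw [pow_succ, hm, ih hk1 hkp, pow_succ]
  have powFp : φ (F ^ p) = φ F ^ p := powF F memF1 memF p hp1 le_rfl
  have powGp : φ (G ^ p) = φ G ^ p := powF G memG1 memG p hp1 le_rfl
  have hXG : φ (PowerSeries.X * G ^ p) = PowerSeries.X * φ G ^ p := by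
    rw [hmul _ _ memX (memG p hp1 le_rfl) memXG, hX, powGp]
  have hXF : φ (PowerSeries.X * F ^ p) = PowerSeries.X * φ F ^ p := by
    rw [hmul _ _ memX (memF p hp1 le_rfl) memXF, hX, powFp]
  have hsum1 : φ H₁ = φ F ^ p + PowerSeries.X * φ G ^ p := by
    rw [show H₁ = F ^ p + PowerSeries.X * G ^ p from rfl,
      hadd _ _ (memF p hp1 le_rfl) memXG memH1, powFp, hXG]
  have hcart := cartier p F G (φ F) (φ G) (by rw [← hsum1, hH1])
  refine ⟨hcart.1.symm, hcart.2.symm, ?_⟩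
  rw [show H₂ = G ^ p + PowerSeries.X * F ^ p from rfl,
    hadd _ _ (memG p hp1 le_rfl) memXF memH2, hXF,
    powGp, ← hcart.1, ← hcart.2]
end
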